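/- Let n ≥ 4 and let I' be an order ideal of F₃(n) with max ⋃ I' = n. Let G' be the set of ⪯-maximal elements of I', H' the set of ⪯-minimal elements of F₃(n)∖I', and E' = G' ∪ H'. Then G' and H' are disjoint and the elements of E' have pairwise distinct gaps. Moreover, if e' = (i,j) and f' = (k,ℓ) are elements of E' with gap(e') < gap(f') such that no element of E' has gap strictly between gap(e') and gap(f'), then: if e' ∈ G' and f' ∈ H', then 0 < k ≤ i and ℓ = j+1; and if e' ∈ H' and f' ∈ G', then k = i−1 and j ≤ ℓ < n. -/
import Mathlib


/-- The 4-element set `{i, i+1, j, j+1}`, denoted `(i,j)` in the paper. -/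
def pairSet (i j : ℕ) : Finset ℕ := {i, i + 1, j, j + 1}

/-- Membership in the collection `F₃(n)` of 4-element subsets of `{1,…,n}`
of the form `{i, i+1, j, j+1}` with `1 ≤ i`, `i+2 ≤ j`, `j+1 ≤ n`. -/
def memF3 (n : ℕ) (f : Finset ℕ) : Prop :=
  ∃ i j : ℕ, 1 ≤ i ∧ i + 2 ≤ j ∧ j + 1 ≤ n ∧ f = pairSet i j

/-- The partial order `⪯` on finite subsets of `ℕ` of equal cardinality:
componentwise comparison of the increasingly sorted lists of elements. -/
def squeezedLE (f g : Finset ℕ) : Prop :=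
  List.Forall₂ (· ≤ ·) (f.sort (· ≤ ·)) (g.sort (· ≤ ·))

/-- `I` is an order ideal of `F₃(n)` w.r.t. `⪯`. -/
def IsIdealF3 (n : ℕ) (I : Set (Finset ℕ)) : Prop :=
  (∀ f ∈ I, memF3 n f) ∧
  ∀ f g : Finset ℕ, memF3 n f → g ∈ I → squeezedLE f g → f ∈ I

/-- `max ⋃ I`, the largest vertex used by the collection `I`. -/
noncomputable def maxVertex (I : Set (Finset ℕ)) : ℕ :=
  sSup (⋃ f ∈ I, (f : Set ℕ))

/-- `0 * K = {{0} ∪ f : f ∈ K}`. -/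
def coneZero (K : Set (Finset ℕ)) : Set (Finset ℕ) := (insert 0) '' K

/-- A facet of the squeezed sphere `S(I)`: a 4-element set contained in
exactly one member of `I`. -/
def isFacetOfS (I : Set (Finset ℕ)) (F : Finset ℕ) : Prop :=
  F.card = 4 ∧ ∃! g, g ∈ I ∧ F ⊆ g

/-- The gap of `(i,j) = {i, i+1, j, j+1}`, i.e. `j - i - 2`. -/
def gapOf (f : Finset ℕ) : ℕ :=
  f.sup id - (f.sort (· ≤ ·)).headI - 3

/-- `m` is a `⪯`-minimal element of the set `S`. -/
def IsMinIn (S : Set (Finset ℕ)) (m : Finset ℕ) : Prop :=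
  m ∈ S ∧ ∀ x ∈ S, squeezedLE x m → x = m

/-- `m` is a `⪯`-maximal element of the set `S`. -/
def IsMaxIn (S : Set (Finset ℕ)) (m : Finset ℕ) : Prop :=
  m ∈ S ∧ ∀ x ∈ S, squeezedLE m x → x = m

/-- The set `G'` of `⪯`-maximal elements of `I`. -/
def maxElems (I : Set (Finset ℕ)) : Set (Finset ℕ) := {g | IsMaxIn I g}

/-- The set `H'` of `⪯`-minimal elements of `F₃(n) ∖ I`. -/
def minElems (n : ℕ) (I : Set (Finset ℕ)) : Set (Finset ℕ) :=
  {h | IsMinIn {x | memF3 n x ∧ x ∉ I} h}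

/- ### basic lemmas -/

lemma pairSet_sort {i j : ℕ} (h : i + 2 ≤ j) : (pairSet i j).sort (· ≤ ·) = [i, i+1, j, j+1] := by
  unfold pairSet
  rw [Finset.sort_insert, Finset.sort_insert, Finset.sort_insert, Finset.sort_singleton] <;>
    simp <;> omega

lemma squeezedLE_iff {i j k l : ℕ} (hij : i + 2 ≤ j) (hkl : k + 2 ≤ l) :
    squeezedLE (pairSet i j) (pairSet k l) ↔ i ≤ k ∧ j ≤ l := by
  unfold squeezedLE
  rw [pairSet_sort hij, pairSet_sort hkl]
  constructor
  · intro h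
    simp only [List.forall₂_cons] at h
    omega
  · rintro ⟨h1, h2⟩
    exact List.Forall₂.cons h1 (List.Forall₂.cons (by omega)
      (List.Forall₂.cons h2 (List.Forall₂.cons (by omega) List.Forall₂.nil)))

lemma pairSet_inj {i j k l : ℕ} (hij : i + 2 ≤ j) (hkl : k + 2 ≤ l)
    (h : pairSet i j = pairSet k l) : i = k ∧ j = l := by
  have h2 : [i,i+1,j,j+1] = [k,k+1,l,l+1] := by
    rw [← pairSet_sort hij, ← pairSet_sort hkl, h]
  simp at h2; omega

lemma gapOf_pairSet {i j : ℕ} (hij : i + 2 ≤ j) : gapOf (pairSet i j) = j - i - 2 := by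
  unfold gapOf
  rw [pairSet_sort hij]
  have : (pairSet i j).sup id = j + 1 := by
    apply le_antisymm
    · simp [pairSet]; omega
    · apply Finset.le_sup (f := id); simp [pairSet]
  rw [this]; simp; omega

lemma mem_pairSet {x i j : ℕ} : x ∈ pairSet i j ↔ x = i ∨ x = i + 1 ∨ x = j ∨ x = j + 1 := by
  simp [pairSet]

section Main
variable {n : ℕ} {I : Set (Finset ℕ)}

lemma mem_valid (hI : IsIdealF3 n I) {i j : ℕ} (hij : i + 2 ≤ j) (h : pairSet i j ∈ I) :
    1 ≤ i ∧ j + 1 ≤ n := by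
  obtain ⟨i', j', h1, h2, h3, he⟩ := hI.1 _ h
  obtain ⟨rfl, rfl⟩ : i = i' ∧ j = j' := pairSet_inj hij h2 he
  exact ⟨h1, h3⟩

lemma Imono (hI : IsIdealF3 n I) {i j k l : ℕ} (hkl : k + 2 ≤ l) (hmem : pairSet k l ∈ I)
    (h1 : 1 ≤ i) (hij : i + 2 ≤ j) (hik : i ≤ k) (hjl : j ≤ l) : pairSet i j ∈ I := by
  have hv := mem_valid hI hkl hmem
  exact hI.2 _ _ ⟨i, j, h1, hij, by omega, rfl⟩ hmem ((squeezedLE_iff hij hkl).2 ⟨hik, hjl⟩)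

lemma base_mem (hI : IsIdealF3 n I) (hn : 4 ≤ n) (hmax : maxVertex I = n) :
    pairSet 1 (n-1) ∈ I := by
  classical
  set S : Set ℕ := ⋃ f ∈ I, (f : Set ℕ) with hS
  have hbdd : BddAbove S := by
    refine ⟨n, ?_⟩
    rintro x hx
    simp only [hS, Set.mem_iUnion] at hx
    obtain ⟨f, hf, hxf⟩ := hx
    obtain ⟨i, j, h1, h2, h3, rfl⟩ := hI.1 f hf
    rw [Finset.mem_coe, mem_pairSet] at hxf
    omega
  have hne : S.Nonempty := by
    rcases Set.eq_empty_or_nonempty S with he | hne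
    · exfalso
      have : maxVertex I = 0 := by
        unfold maxVertex; rw [← hS, he]; exact csSup_empty
      omega
    · exact hne
  have hnS : n ∈ S := by
    have := Nat.sSup_mem hne hbdd
    rwa [show sSup S = n from hmax] at this
  simp only [hS, Set.mem_iUnion] at hnS
  obtain ⟨f, hf, hnf⟩ := hnS
  obtain ⟨i, j, h1, h2, h3, rfl⟩ := hI.1 f hf
  rw [Finset.mem_coe, mem_pairSet] at hnf
  have hj : j = n - 1 := by omega
  subst hj
  exact Imono hI h2 hf le_rfl (by omega) h1 le_rfl

noncomputable def Afun (I : Set (Finset ℕ)) (g : ℕ) : ℕ := sSup {i | pairSet i (i+2+g) ∈ I}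

lemma A_ub (hI : IsIdealF3 n I) {i j g : ℕ} (hj : j = i + 2 + g) (h : pairSet i j ∈ I) :
    i ≤ Afun I g := by
  subst hj
  refine le_csSup ⟨n, ?_⟩ h
  rintro x hx
  have := mem_valid hI (by omega) hx
  omega

lemma A_mem (hI : IsIdealF3 n I) (hn : 4 ≤ n) (hmax : maxVertex I = n) {g : ℕ}
    (hg : g + 4 ≤ n) :
    pairSet (Afun I g) (Afun I g + 2 + g) ∈ I ∧ 1 ≤ Afun I g ∧ Afun I g + 3 + g ≤ n := by
  have hone : pairSet 1 (1 + 2 + g) ∈ I := by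
    refine Imono hI (by omega) (base_mem hI hn hmax) le_rfl (by omega) le_rfl (by omega)
  have hbdd : BddAbove {i | pairSet i (i+2+g) ∈ I} := by
    refine ⟨n, ?_⟩
    rintro x hx
    have := mem_valid hI (by omega) hx
    omega
  have hmem : Afun I g ∈ {i | pairSet i (i+2+g) ∈ I} :=
    Nat.sSup_mem ⟨1, hone⟩ hbdd
  have h1 : 1 ≤ Afun I g := le_csSup hbdd hone
  have hv := mem_valid hI (by omega) hmem
  exact ⟨hmem, h1, by omega⟩

lemma A_mem_iff (hI : IsIdealF3 n I) (hn : 4 ≤ n) (hmax : maxVertex I = n) {g i j : ℕ}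
    (hg : g + 4 ≤ n) (hi : 1 ≤ i) (hj : j = i + 2 + g) :
    pairSet i j ∈ I ↔ i ≤ Afun I g := by
  subst hj
  constructor
  · exact A_ub hI rfl
  · intro hle
    have hA := A_mem hI hn hmax hg
    exact Imono hI (by omega) hA.1 hi (by omega) hle (by omega)

lemma A_mono (hI : IsIdealF3 n I) (hn : 4 ≤ n) (hmax : maxVertex I = n) {g : ℕ}
    (hg : g + 5 ≤ n) : Afun I (g+1) ≤ Afun I g := by
  have hA := A_mem hI hn hmax (g := g+1) (by omega)
  refine A_ub hI rfl (Imono hI (by omega) hA.1 hA.2.1 (by omega) le_rfl (by omega))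

lemma A_slope (hI : IsIdealF3 n I) (hn : 4 ≤ n) (hmax : maxVertex I = n) {g : ℕ}
    (hg : g + 5 ≤ n) : Afun I g ≤ Afun I (g+1) + 1 := by
  by_cases h2 : 2 ≤ Afun I g
  · have hA := A_mem hI hn hmax (g := g) (by omega)
    have hmem : pairSet (Afun I g - 1) (Afun I g + 2 + g) ∈ I :=
      Imono hI (by omega) hA.1 (by omega) (by omega) (by omega) le_rfl
    have := A_ub hI (g := g+1) (by omega) hmem
    omega
  · omega

/- ### characterization of maximal / minimal elements -/

lemma G_char (hI : IsIdealF3 n I) {i j : ℕ} (h1 : 1 ≤ i) (hij : i + 2 ≤ j) (hjn : j + 1 ≤ n) :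
    pairSet i j ∈ maxElems I ↔ pairSet i j ∈ I ∧
      (j + 2 ≤ n → pairSet i (j+1) ∉ I) ∧ (i + 3 ≤ j → pairSet (i+1) j ∉ I) := by
  constructor
  · rintro ⟨hm, hmx⟩
    refine ⟨hm, ?_, ?_⟩
    · intro hj2 hc
      have := hmx _ hc ((squeezedLE_iff hij (by omega)).2 ⟨le_rfl, by omega⟩)
      have := pairSet_inj (by omega) hij this
      omega
    · intro hi3 hc
      have := hmx _ hc ((squeezedLE_iff hij (by omega)).2 ⟨by omega, le_rfl⟩)
      have := pairSet_inj (by omega) hij this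
      omega
  · rintro ⟨hm, hup, hright⟩
    refine ⟨hm, ?_⟩
    intro x hx hle
    obtain ⟨k, l, hk1, hkl, hln, rfl⟩ := hI.1 x hx
    obtain ⟨hik, hjl⟩ := (squeezedLE_iff hij hkl).1 hle
    have hjl' : j = l := by
      by_contra hne
      have hjl2 : j + 1 ≤ l := by omega
      exact hup (by omega) (Imono hI hkl hx h1 (by omega) hik hjl2)
    have hik' : i = k := by
      by_contra hne
      have : i + 1 ≤ k := by omega
      exact hright (by omega) (Imono hI hkl hx (by omega) (by omega) this (by omega))
    rw [hik', hjl']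

lemma H_char (hI : IsIdealF3 n I) {i j : ℕ} (h1 : 1 ≤ i) (hij : i + 2 ≤ j) (hjn : j + 1 ≤ n) :
    pairSet i j ∈ minElems n I ↔ pairSet i j ∉ I ∧
      (2 ≤ i → pairSet (i-1) j ∈ I) ∧ (i + 3 ≤ j → pairSet i (j-1) ∈ I) := by
  constructor
  · rintro ⟨⟨hF, hnI⟩, hmin⟩
    refine ⟨hnI, ?_, ?_⟩
    · intro h2
      by_contra hc
      have hmem : pairSet (i-1) j ∈ {x | memF3 n x ∧ x ∉ I} :=
        ⟨⟨i-1, j, by omega, by omega, hjn, rfl⟩, hc⟩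
      have := hmin _ hmem ((squeezedLE_iff (by omega) hij).2 ⟨by omega, le_rfl⟩)
      have := pairSet_inj (by omega) hij this
      omega
    · intro h3
      by_contra hc
      have hmem : pairSet i (j-1) ∈ {x | memF3 n x ∧ x ∉ I} :=
        ⟨⟨i, j-1, h1, by omega, by omega, rfl⟩, hc⟩
      have := hmin _ hmem ((squeezedLE_iff (by omega) hij).2 ⟨le_rfl, by omega⟩)
      have := pairSet_inj (by omega) hij this
      omega
  · rintro ⟨hnI, hleft, hdown⟩
    refine ⟨⟨⟨i, j, h1, hij, hjn, rfl⟩, hnI⟩, ?_⟩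
    rintro x ⟨hxF, hxI⟩ hle
    obtain ⟨k, l, hk1, hkl, hln, rfl⟩ := hxF
    obtain ⟨hik, hjl⟩ := (squeezedLE_iff hkl hij).1 hle
    have hik' : k = i := by
      by_contra hne
      have h2 : 2 ≤ i := by omega
      exact hxI (Imono hI (by omega) (hleft h2) hk1 hkl (by omega) hjl)
    have hjl' : l = j := by
      by_contra hne
      have h3 : i + 3 ≤ j := by omega
      exact hxI (Imono hI (by omega) (hdown h3) hk1 hkl (by omega) (by omega))
    rw [hik', hjl']

/- ### A-versions -/

lemma G_eq_A (hI : IsIdealF3 n I) (hn : 4 ≤ n) (hmax : maxVertex I = n) {i j g : ℕ}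
    (h1 : 1 ≤ i) (hj : j = i + 2 + g) (hjn : j + 1 ≤ n)
    (hG : pairSet i j ∈ maxElems I) : i = Afun I g := by
  subst hj
  have hc := (G_char hI h1 (by omega) hjn).1 hG
  have hub := A_ub hI rfl hc.1
  by_contra hne
  have hlt : i < Afun I g := by omega
  have hA := A_mem hI hn hmax (g := g) (by omega)
  have hmem : pairSet i (i + 2 + g + 1) ∈ I :=
    Imono hI (by omega) hA.1 h1 (by omega) (by omega) (by omega)
  exact hc.2.1 (by omega) hmem

lemma H_eq_A (hI : IsIdealF3 n I) (hn : 4 ≤ n) (hmax : maxVertex I = n) {i j g : ℕ}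
    (h1 : 1 ≤ i) (hj : j = i + 2 + g) (hjn : j + 1 ≤ n)
    (hH : pairSet i j ∈ minElems n I) : i = Afun I g + 1 := by
  subst hj
  have hc := (H_char hI h1 (by omega) hjn).1 hH
  have hgt : Afun I g < i := by
    by_contra hle
    exact hc.1 ((A_mem_iff hI hn hmax (by omega) h1 rfl).2 (by omega))
  by_contra hne
  have h2 : 2 ≤ i := by omega
  have hmem := hc.2.1 h2
  have : i - 1 ≤ Afun I (g+1) := A_ub hI (by omega) hmem
  have := A_mono hI hn hmax (g := g) (by omega)
  omega

lemma G_next (hI : IsIdealF3 n I) (hn : 4 ≤ n) (hmax : maxVertex I = n) {i j g : ℕ}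
    (h1 : 1 ≤ i) (hj : j = i + 2 + g) (hjn : j + 1 ≤ n) (hg5 : g + 5 ≤ n)
    (hG : pairSet i j ∈ maxElems I) : Afun I (g+1) + 1 = Afun I g := by
  have hi := G_eq_A hI hn hmax h1 hj hjn hG
  have hslope := A_slope hI hn hmax (g := g) hg5
  have hmono := A_mono hI hn hmax (g := g) hg5
  subst hj
  have hc := (G_char hI h1 (by omega) hjn).1 hG
  by_cases hfull : i + 4 + g ≤ n
  · have hnmem := hc.2.1 (by omega)
    have : ¬ (i ≤ Afun I (g+1)) := by
      intro hle
      exact hnmem ((A_mem_iff hI hn hmax (by omega) h1 (by omega)).2 hle)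
    omega
  · have := (A_mem hI hn hmax (g := g+1) (by omega)).2.2
    omega

lemma H_next (hI : IsIdealF3 n I) (hn : 4 ≤ n) (hmax : maxVertex I = n) {i j g : ℕ}
    (h1 : 1 ≤ i) (hj : j = i + 2 + g) (hjn : j + 1 ≤ n)
    (hH : pairSet i j ∈ minElems n I) : Afun I (g+1) = Afun I g := by
  have hi := H_eq_A hI hn hmax h1 hj hjn hH
  subst hj
  have hA := A_mem hI hn hmax (g := g) (by omega)
  have hc := (H_char hI h1 (by omega) hjn).1 hH
  have hmem := hc.2.1 (by omega)
  have hub : i - 1 ≤ Afun I (g+1) := A_ub hI (by omega) hmem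
  have hmono := A_mono hI hn hmax (g := g) (by omega)
  omega

/- ### constructing elements of G'/H' from A-patterns -/

lemma G_of_A (hI : IsIdealF3 n I) (hn : 4 ≤ n) (hmax : maxVertex I = n) {t : ℕ}
    (ht1 : 1 ≤ t) (ht5 : t + 5 ≤ n)
    (hnext : Afun I (t+1) < Afun I t) (hprev : Afun I (t-1) = Afun I t) :
    pairSet (Afun I t) (Afun I t + 2 + t) ∈ maxElems I := by
  have hA := A_mem hI hn hmax (g := t) (by omega)
  refine (G_char hI hA.2.1 (by omega) (by omega)).2 ⟨hA.1, ?_, ?_⟩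
  · intro hj2 hc
    have : Afun I t ≤ Afun I (t+1) := A_ub hI (by omega) hc
    omega
  · intro hi3 hc
    have : Afun I t + 1 ≤ Afun I (t-1) := A_ub hI (g := t - 1) (by omega) hc
    omega

lemma H_of_A (hI : IsIdealF3 n I) (hn : 4 ≤ n) (hmax : maxVertex I = n) {t : ℕ}
    (ht1 : 1 ≤ t) (ht5 : t + 5 ≤ n) (hvalid : Afun I t + 4 + t ≤ n)
    (hnext : Afun I (t+1) = Afun I t) (hprev : Afun I (t-1) = Afun I t + 1) :
    pairSet (Afun I t + 1) (Afun I t + 3 + t) ∈ minElems n I := by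
  have hA := A_mem hI hn hmax (g := t) (by omega)
  refine (H_char hI (by omega) (by omega) (by omega)).2 ⟨?_, ?_, ?_⟩
  · intro hc
    have : Afun I t + 1 ≤ Afun I t := A_ub hI (by omega) hc
    omega
  · intro h2
    refine (A_mem_iff hI hn hmax (g := t+1) (by omega) hA.2.1 (by omega)).2 (by omega)
  · intro h3
    refine (A_mem_iff hI hn hmax (g := t-1) (by omega) (by omega) (by omega)).2 (by omega)

/- ### runs -/

lemma drop_run (hI : IsIdealF3 n I) (hn : 4 ≤ n) (hmax : maxVertex I = n) {g h : ℕ}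
    (hgh : g < h) (hh4 : h + 4 ≤ n)
    (hstart : Afun I (g+1) + 1 = Afun I g)
    (hnob : ∀ t, g < t → t < h →
      pairSet (Afun I t + 1) (Afun I t + 3 + t) ∉ minElems n I) :
    Afun I h + (h - g) = Afun I g := by
  have key : ∀ t, g ≤ t → t ≤ h → Afun I t + (t - g) = Afun I g := by
    intro t
    induction t using Nat.strong_induction_on with
    | _ t ih =>
      intro hgt hth
      rcases Nat.eq_or_lt_of_le hgt with rfl | hlt
      · simp
      · obtain ⟨s, rfl⟩ : ∃ s, t = s + 1 := ⟨t - 1, by omega⟩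
        have hgs : g ≤ s := by omega
        have hprev := ih s (by omega) (by omega) (by omega)
        have hstep : Afun I (s+1) + 1 = Afun I s := by
          have hmono := A_mono hI hn hmax (g := s) (by omega)
          have hslope := A_slope hI hn hmax (g := s) (by omega)
          rcases Nat.eq_or_lt_of_le hmono with heq | hlt2
          · exfalso
            rcases Nat.eq_or_lt_of_le hgs with rfl | hgt2
            · omega
            · obtain ⟨u, rfl⟩ : ∃ u, s = u + 1 := ⟨s - 1, by omega⟩
              have hpp := ih u (by omega) (by omega) (by omega)
              have hAt1 := A_mem hI hn hmax (g := u+1+1) (by omega)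
              refine hnob (u+1) (by omega) (by omega) ?_
              have hH := H_of_A hI hn hmax (t := u+1) (by omega) (by omega)
                (by omega) (by omega) (by simp only [Nat.add_sub_cancel]; omega)
              exact hH
          · omega
        omega
  exact key h (by omega) le_rfl

lemma plateau_run (hI : IsIdealF3 n I) (hn : 4 ≤ n) (hmax : maxVertex I = n) {g h : ℕ}
    (hgh : g < h) (hh4 : h + 4 ≤ n)
    (hstart : Afun I (g+1) = Afun I g)
    (hnob : ∀ t, g < t → t < h →
      pairSet (Afun I t) (Afun I t + 2 + t) ∉ maxElems I) :
    Afun I h = Afun I g := by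
  have key : ∀ t, g ≤ t → t ≤ h → Afun I t = Afun I g := by
    intro t
    induction t using Nat.strong_induction_on with
    | _ t ih =>
      intro hgt hth
      rcases Nat.eq_or_lt_of_le hgt with rfl | hlt
      · rfl
      · obtain ⟨s, rfl⟩ : ∃ s, t = s + 1 := ⟨t - 1, by omega⟩
        have hgs : g ≤ s := by omega
        have hprev := ih s (by omega) (by omega) (by omega)
        have hstep : Afun I (s+1) = Afun I s := by
          have hmono := A_mono hI hn hmax (g := s) (by omega)
          have hslope := A_slope hI hn hmax (g := s) (by omega)
          rcases Nat.eq_or_lt_of_le hmono with heq | hlt2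
          · exact heq
          · exfalso
            rcases Nat.eq_or_lt_of_le hgs with rfl | hgt2
            · omega
            · obtain ⟨u, rfl⟩ : ∃ u, s = u + 1 := ⟨s - 1, by omega⟩
              have hpp := ih u (by omega) (by omega) (by omega)
              refine hnob (u+1) (by omega) (by omega) ?_
              exact G_of_A hI hn hmax (t := u+1) (by omega) (by omega)
                (by omega) (by simp only [Nat.add_sub_cancel]; omega)
        omega
  exact key h (by omega) le_rfl

end Main

/-- **Lemma 1(a).** For an order ideal `I'` of `F₃(n)` with `max ⋃ I' = n`,
the sets `G'` (maximal elements of `I'`) and `H'` (minimal elements of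
`F₃(n) ∖ I'`) are disjoint, the elements of `E' = G' ∪ H'` have pairwise
distinct gaps, and for consecutive elements `e' = (i,j)`, `f' = (k,ℓ)` of `E'`
(in the order of increasing gap): if `e' ∈ G'` and `f' ∈ H'` then `0 < k ≤ i`
and `ℓ = j+1`; if `e' ∈ H'` and `f' ∈ G'` then `k = i-1` and `j ≤ ℓ < n`. -/
theorem consecutive_elements_structure (n : ℕ) (hn : 4 ≤ n)
    (I : Set (Finset ℕ)) (hI : IsIdealF3 n I) (hmax : maxVertex I = n) :
    Disjoint (maxElems I) (minElems n I) ∧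
    (∀ f ∈ maxElems I ∪ minElems n I, ∀ g ∈ maxElems I ∪ minElems n I,
      f ≠ g → gapOf f ≠ gapOf g) ∧
    (∀ i j k l : ℕ, 1 ≤ i → i + 2 ≤ j → j + 1 ≤ n →
      1 ≤ k → k + 2 ≤ l → l + 1 ≤ n →
      pairSet i j ∈ maxElems I ∪ minElems n I →
      pairSet k l ∈ maxElems I ∪ minElems n I →
      gapOf (pairSet i j) < gapOf (pairSet k l) →
      (∀ x ∈ maxElems I ∪ minElems n I,
        ¬ (gapOf (pairSet i j) < gapOf x ∧ gapOf x < gapOf (pairSet k l))) →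
      ((pairSet i j ∈ maxElems I → pairSet k l ∈ minElems n I →
          0 < k ∧ k ≤ i ∧ l = j + 1) ∧
        (pairSet i j ∈ minElems n I → pairSet k l ∈ maxElems I →
          k + 1 = i ∧ j ≤ l ∧ l < n))) := by
  classical
  refine ⟨?_, ?_, ?_⟩
  · rw [Set.disjoint_left]
    intro x hG hH
    exact hH.1.2 hG.1
  · rintro f hf g' hg' hne heq
    obtain ⟨a, b, ha1, hab, hbn, rfl⟩ : memF3 n f := by
      rcases hf with h | h
      · exact hI.1 _ h.1
      · exact h.1.1
    obtain ⟨c, d, hc1, hcd, hdn, rfl⟩ : memF3 n (g' : Finset ℕ) := by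
      rcases hg' with h | h
      · exact hI.1 _ h.1
      · exact h.1.1
    obtain ⟨t, rfl⟩ : ∃ t, b = a + 2 + t := ⟨b - a - 2, by omega⟩
    obtain ⟨t', rfl⟩ : ∃ t', d = c + 2 + t' := ⟨d - c - 2, by omega⟩
    rw [gapOf_pairSet (by omega), gapOf_pairSet (by omega)] at heq
    obtain rfl : t = t' := by omega
    rcases hf with hfG | hfH <;> rcases hg' with hgG | hgH
    · have h1 := G_eq_A hI hn hmax ha1 rfl hbn hfG
      have h2 := G_eq_A hI hn hmax hc1 rfl hdn hgG
      exact hne (by rw [show a = c from by omega])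
    · have h1 := G_eq_A hI hn hmax ha1 rfl hbn hfG
      have h2 := H_eq_A hI hn hmax hc1 rfl hdn hgH
      have hcG := (G_char hI ha1 (by omega) hbn).1 hfG
      have hcH := (H_char hI hc1 (by omega) hdn).1 hgH
      have hmem := hcH.2.1 (by omega)
      have hnot := hcG.2.1 (by omega)
      apply hnot
      have he : pairSet (c-1) (c+2+t) = pairSet a (a+2+t+1) := by
        congr 1 <;> omega
      rwa [he] at hmem
    · have h1 := H_eq_A hI hn hmax ha1 rfl hbn hfH
      have h2 := G_eq_A hI hn hmax hc1 rfl hdn hgG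
      have hcH := (H_char hI ha1 (by omega) hbn).1 hfH
      have hcG := (G_char hI hc1 (by omega) hdn).1 hgG
      have hmem := hcH.2.1 (by omega)
      have hnot := hcG.2.1 (by omega)
      apply hnot
      have he : pairSet (a-1) (a+2+t) = pairSet c (c+2+t+1) := by
        congr 1 <;> omega
      rwa [he] at hmem
    · have h1 := H_eq_A hI hn hmax ha1 rfl hbn hfH
      have h2 := H_eq_A hI hn hmax hc1 rfl hdn hgH
      exact hne (by rw [show a = c from by omega])
  · intro i j k l hi1 hij hjn hk1 hkl hln hiu hku hlt hnob
    obtain ⟨g, rfl⟩ : ∃ g, j = i + 2 + g := ⟨j - i - 2, by omega⟩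
    obtain ⟨h, rfl⟩ : ∃ h, l = k + 2 + h := ⟨l - k - 2, by omega⟩
    rw [gapOf_pairSet (by omega), gapOf_pairSet (by omega)] at hlt
    have hgh : g < h := by omega
    have hh4 : h + 4 ≤ n := by omega
    have hg5 : g + 5 ≤ n := by omega
    constructor
    · intro hG hH
      have hiA := G_eq_A hI hn hmax hi1 rfl hjn hG
      have hkA := H_eq_A hI hn hmax hk1 rfl hln hH
      have hstart := G_next hI hn hmax hi1 rfl hjn hg5 hG
      have hnob' : ∀ t, g < t → t < h →
          pairSet (Afun I t + 1) (Afun I t + 3 + t) ∉ minElems n I := by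
        intro t htg hth hmem
        have hAt := A_mem hI hn hmax (g := t) (by omega)
        have hx := hnob _ (Set.mem_union_right _ hmem)
        rw [gapOf_pairSet (by omega), gapOf_pairSet (by omega),
          gapOf_pairSet (by omega)] at hx
        exact hx ⟨by omega, by omega⟩
      have hrun := drop_run hI hn hmax hgh hh4 hstart hnob'
      have hAh := A_mem hI hn hmax (g := h) (by omega)
      exact ⟨by omega, by omega, by omega⟩
    · intro hH hG
      have hiA := H_eq_A hI hn hmax hi1 rfl hjn hH
      have hkA := G_eq_A hI hn hmax hk1 rfl hln hG
      have hstart := H_next hI hn hmax hi1 rfl hjn hH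
      have hnob' : ∀ t, g < t → t < h →
          pairSet (Afun I t) (Afun I t + 2 + t) ∉ maxElems I := by
        intro t htg hth hmem
        have hAt := A_mem hI hn hmax (g := t) (by omega)
        have hx := hnob _ (Set.mem_union_left _ hmem)
        rw [gapOf_pairSet (by omega), gapOf_pairSet (by omega),
          gapOf_pairSet (by omega)] at hx
        exact hx ⟨by omega, by omega⟩
      have hrun := plateau_run hI hn hmax hgh hh4 hstart hnob'
      exact ⟨by omega, by omega, by omega⟩
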